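/- Let I=⟨A,∅,R,R?⟩ be an AtIAF and S⊆A a set of arguments such that S is not stable-ad with respect to I. Then for every attack r=(a,b)∈R? such that a∉S or b∉S: r∈RE⁺(I,S,(ad,true)) if and only if a∈S, b∉S⁺_I, and S is not a subset of {b}^∼_I. -/
import Mathlib


universe u

/-- An abstract argumentation framework: a set of arguments with an attack relation. -/
structure AF (α : Type u) where
  args : Set α
  att : Set (α × α)

namespace AF

variable {α : Type u}

/-- `S⁺_F`: arguments attacked by `S`. -/
def plusSet (F : AF α) (S : Set α) : Set α := {a | a ∈ F.args ∧ ∃ b ∈ S, (b, a) ∈ F.att}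

/-- `S⁻_F`: arguments attacking `S`. -/
def minusSet (F : AF α) (S : Set α) : Set α := {a | a ∈ F.args ∧ ∃ b ∈ S, (a, b) ∈ F.att}

/-- `S` is conflict-free in `F`. -/
def confFree (F : AF α) (S : Set α) : Prop := S ∩ F.plusSet S = ∅

/-- `S` defends `a` in `F`: every attacker of `a` is attacked by `S`. -/
def defends (F : AF α) (S : Set α) (a : α) : Prop := ∀ b, (b, a) ∈ F.att → b ∈ F.plusSet S

/-- The characteristic function `Γ_F(S)`: arguments defended by `S`. -/
def Γ (F : AF α) (S : Set α) : Set α := {a | a ∈ F.args ∧ F.defends S a}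

/-- Admissible: conflict-free and self-defending. -/
def isAd (F : AF α) (S : Set α) : Prop := S ⊆ F.args ∧ F.confFree S ∧ S ⊆ F.Γ S

/-- Stable: conflict-free and attacking exactly the outside. -/
def isSt (F : AF α) (S : Set α) : Prop := S ⊆ F.args ∧ F.confFree S ∧ F.plusSet S = F.args \ S

/-- Complete: admissible and containing all defended arguments. -/
def isCo (F : AF α) (S : Set α) : Prop := F.isAd S ∧ F.Γ S ⊆ S

/-- Grounded: ⊆-minimal complete. -/
def isGr (F : AF α) (S : Set α) : Prop := F.isCo S ∧ ∀ T, F.isCo T → T ⊆ S → T = S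

/-- Preferred: ⊆-maximal admissible. -/
def isPr (F : AF α) (S : Set α) : Prop := F.isAd S ∧ ∀ T, F.isAd T → S ⊆ T → S = T

end AF

/-- The five common semantics. -/
inductive Sem : Type
  | ad | st | co | gr | pr
deriving DecidableEq

/-- `S` is a `σ`-extension of `F`. -/
def extOf {α : Type u} : Sem → AF α → Set α → Prop
  | .ad => AF.isAd
  | .st => AF.isSt
  | .co => AF.isCo
  | .gr => AF.isGr
  | .pr => AF.isPr

/-- An incomplete argumentation framework (data part). -/
structure IAF (α : Type u) where
  A : Set α
  Aq : Set α
  R : Set (α × α)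
  Rq : Set (α × α)

namespace IAF

variable {α : Type u}

/-- Well-formedness: `A`,`A?` disjoint; `R`,`R?` disjoint subsets of `(A∪A?)×(A∪A?)`. -/
def WF (I : IAF α) : Prop :=
  Disjoint I.A I.Aq ∧ Disjoint I.R I.Rq ∧
  I.R ⊆ (I.A ∪ I.Aq) ×ˢ (I.A ∪ I.Aq) ∧
  I.Rq ⊆ (I.A ∪ I.Aq) ×ˢ (I.A ∪ I.Aq)

/-- `cert(I)`: the AF projected on the certain part. -/
def cert (I : IAF α) : AF α := ⟨I.A, I.R ∩ I.A ×ˢ I.A⟩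

/-- `I'` is a partial completion of `I`. -/
def PartOf (I' I : IAF α) : Prop :=
  I'.WF ∧ I.A ⊆ I'.A ∧ I'.A ⊆ I.A ∪ I.Aq ∧
  I.R ∩ (I'.A ∪ I'.Aq) ×ˢ (I'.A ∪ I'.Aq) ⊆ I'.R ∧
  I'.R ⊆ I.R ∪ I.Rq ∧ I'.Aq ⊆ I.Aq ∧ I'.Rq ⊆ I.Rq

/-- `F` is a completion of `I`. -/
def IsCompletion (I : IAF α) (F : AF α) : Prop := ∃ I' : IAF α, I'.PartOf I ∧ F = I'.cert

/-- `I + R₀` for a set of uncertain attacks. -/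
def addR (I : IAF α) (R0 : Set (α × α)) : IAF α := ⟨I.A, I.Aq, I.R ∪ R0, I.Rq \ R0⟩

/-- `I − R₀` for a set of uncertain attacks. -/
def subR (I : IAF α) (R0 : Set (α × α)) : IAF α := ⟨I.A, I.Aq, I.R, I.Rq \ R0⟩

/-- `I + A₀` for a set of uncertain arguments. -/
def addA (I : IAF α) (A0 : Set α) : IAF α := ⟨I.A ∪ A0, I.Aq \ A0, I.R, I.Rq⟩

/-- `I − A₀` for a set of uncertain arguments. -/
def subA (I : IAF α) (A0 : Set α) : IAF α :=
  ⟨I.A, I.Aq \ A0,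
   I.R \ {p | p ∈ I.R ∪ I.Rq ∧ (p.1 ∈ A0 ∨ p.2 ∈ A0)},
   I.Rq \ {p | p ∈ I.R ∪ I.Rq ∧ (p.1 ∈ A0 ∨ p.2 ∈ A0)}⟩

/-- `S⁺_I`. -/
def plusI (I : IAF α) (S : Set α) : Set α := {a | a ∈ I.A ∪ I.Aq ∧ ∃ b ∈ S, (b, a) ∈ I.R}

/-- `S⁻_I`. -/
def minusI (I : IAF α) (S : Set α) : Set α := {a | a ∈ I.A ∪ I.Aq ∧ ∃ b ∈ S, (a, b) ∈ I.R}

/-- `S^∼_I`. -/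
def simI (I : IAF α) (S : Set α) : Set α :=
  {a | a ∈ I.A ∪ I.Aq ∧ ∀ b ∈ S, (b, a) ∉ I.R ∪ I.Rq}

end IAF

/-- An element of an IAF: either an argument or an attack. -/
inductive Elem (α : Type u) : Type u
  | arg (a : α)
  | att (r : α × α)

/-- `e` is an uncertain element of `I`, i.e. `e ∈ A? ∪ R?`. -/
def IAF.isUnc {α : Type u} (I : IAF α) : Elem α → Prop
  | .arg a => a ∈ I.Aq
  | .att r => r ∈ I.Rq

/-- `I + {e}`. -/
def IAF.addE {α : Type u} (I : IAF α) : Elem α → IAF α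
  | .arg a => I.addA {a}
  | .att r => I.addR {r}

/-- `I − {e}`. -/
def IAF.subE {α : Type u} (I : IAF α) : Elem α → IAF α
  | .arg a => I.subA {a}
  | .att r => I.subR {r}

/-- `e` is the unique uncertain element of `I`, i.e. `A? ∪ R? = {e}`. -/
def onlyUnc {α : Type u} (I : IAF α) : Elem α → Prop
  | .arg a => I.Aq = {a} ∧ I.Rq = ∅
  | .att r => I.Aq = ∅ ∧ I.Rq = {r}

/-- A verification status: a semantics together with true/false. -/
abbrev VStatus := Sem × Bool

/-- `S` has verification status `j` in the AF `F`. -/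
def hasStatus {α : Type u} (F : AF α) (S : Set α) (j : VStatus) : Prop :=
  cond j.2 (extOf j.1 F S) (¬ extOf j.1 F S)

/-- `S` is stable-`j` w.r.t. `I`. -/
def IAF.stableJ {α : Type u} (I : IAF α) (S : Set α) (j : VStatus) : Prop :=
  ∀ F, I.IsCompletion F → hasStatus F S j

/-- `S` is stable-`σ` w.r.t. `I`. -/
def IAF.stableSem {α : Type u} (I : IAF α) (S : Set α) (σ : Sem) : Prop :=
  I.stableJ S (σ, true) ∨ I.stableJ S (σ, false)

/-- `RE⁺(I,S,j)`: uncertain elements whose addition is `j`-relevant for `S` w.r.t. `I`. -/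
def REplus {α : Type u} (I : IAF α) (S : Set α) (j : VStatus) : Set (Elem α) :=
  {e | I.isUnc e ∧ ∃ I' : IAF α, I'.PartOf I ∧ onlyUnc I' e ∧
    hasStatus (I'.addE e).cert S j ∧ ¬ hasStatus (I'.subE e).cert S j}

/-- `RE⁻(I,S,j)`: uncertain elements whose removal is `j`-relevant for `S` w.r.t. `I`. -/
def REminus {α : Type u} (I : IAF α) (S : Set α) (j : VStatus) : Set (Elem α) :=
  {e | I.isUnc e ∧ ∃ I' : IAF α, I'.PartOf I ∧ onlyUnc I' e ∧
    hasStatus (I'.subE e).cert S j ∧ ¬ hasStatus (I'.addE e).cert S j}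

/-- `e` is `σ`-irrelevant for `S` w.r.t. `I`. -/
def irrelevant {α : Type u} (I : IAF α) (S : Set α) (σ : Sem) (e : Elem α) : Prop :=
  e ∉ REplus I S (σ, true) ∧ e ∉ REminus I S (σ, true) ∧
  e ∉ REplus I S (σ, false) ∧ e ∉ REminus I S (σ, false)

/-- `PosVer_σ(I,S) = true`. -/
def PosVer {α : Type u} (σ : Sem) (I : IAF α) (S : Set α) : Prop :=
  ∃ F, I.IsCompletion F ∧ extOf σ F S

/-- `NecVer_σ(I,S) = true`. -/
def NecVer {α : Type u} (σ : Sem) (I : IAF α) (S : Set α) : Prop :=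
  ∀ F, I.IsCompletion F → extOf σ F S

/-- `SRE⁺(I,S,j)`: uncertain elements whose addition is strongly `j`-relevant. -/
def SREplus {α : Type u} (I : IAF α) (S : Set α) (j : VStatus) : Set (Elem α) :=
  {e | I.isUnc e ∧ ∀ I' : IAF α, I'.PartOf (I.subE e) → ¬ I'.stableJ S j}

/-- `SRE⁻(I,S,j)`: uncertain elements whose removal is strongly `j`-relevant. -/
def SREminus {α : Type u} (I : IAF α) (S : Set α) (j : VStatus) : Set (Elem α) :=
  {e | I.isUnc e ∧ ∀ I' : IAF α, I'.PartOf (I.addE e) → ¬ I'.stableJ S j}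

/-- The `OutRel(I,S,(a,b))` predicate. -/
def OutRel {α : Type u} (I : IAF α) (S : Set α) (r : α × α) : Prop :=
  (I.minusI {r.2} \ {r.1}) ∩ I.simI S = ∅ ∧
  PosVer Sem.co
    ((I.addR {p | p ∈ I.Rq ∧ p.1 ∈ S ∧ p.2 ∈ I.minusI {r.2} \ {r.1}}).subR
      {p | p ∈ I.Rq ∧ p.1 ≠ r.1 ∧ p.2 = r.2}) S



section Stmt3Aux

variable {α : Type u}

lemma isAd_iff' (F : AF α) (S : Set α) :
    F.isAd S ↔ S ⊆ F.args ∧ (∀ x ∈ S, x ∉ F.plusSet S) ∧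
      ∀ s ∈ S, ∀ x, (x, s) ∈ F.att → x ∈ F.plusSet S := by
  unfold AF.isAd AF.confFree AF.Γ AF.defends
  rw [Set.eq_empty_iff_forall_notMem]
  constructor
  · rintro ⟨h1, h2, h3⟩
    exact ⟨h1, fun x hx hp => h2 x ⟨hx, hp⟩, fun s hs x hx => (h3 hs).2 x hx⟩
  · rintro ⟨h1, h2, h3⟩
    exact ⟨h1, fun x hx => h2 x hx.1 hx.2, fun s hs => ⟨h1 hs, fun x hx => h3 s hs x hx⟩⟩

lemma ad_of_ad_insert (Aset : Set α) (Q : Set (α × α)) (S : Set α) (a b : α)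
    (hcase : a ∉ S ∨ b ∈ AF.plusSet ⟨Aset, Q⟩ S ∨ ∀ c ∈ S, (b, c) ∉ Q)
    (h : AF.isAd ⟨Aset, insert (a, b) Q⟩ S) : AF.isAd ⟨Aset, Q⟩ S := by
  rw [isAd_iff'] at h ⊢
  obtain ⟨h1, h2, h3⟩ := h
  refine ⟨h1, ?_, ?_⟩
  · intro x hx hp
    exact h2 x hx ⟨hp.1, hp.2.imp fun t ht => ⟨ht.1, Set.mem_insert_iff.mpr (Or.inr ht.2)⟩⟩
  · intro s hs x hx
    have hx' := h3 s hs x (Set.mem_insert_iff.mpr (Or.inr hx))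
    obtain ⟨hxA, t, ht, htx⟩ := hx'
    rcases Set.mem_insert_iff.mp htx with heq | hQ
    · have hxb : x = b := congrArg Prod.snd heq
      have hta : t = a := congrArg Prod.fst heq
      rcases hcase with h | h | h
      · exact absurd (hta ▸ ht) h
      · exact hxb.symm ▸ h
      · exact absurd (hxb ▸ hx) (h s hs)
    · exact ⟨hxA, t, ht, hQ⟩

lemma cert_addR_eq (I' : IAF α) (r : α × α) (h : I'.R ⊆ I'.A ×ˢ I'.A)
    (hr : r ∈ I'.A ×ˢ I'.A) :
    (I'.addR {r}).cert = ⟨I'.A, insert r I'.R⟩ := by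
  simp only [IAF.addR, IAF.cert]
  congr 1
  rw [Set.union_singleton, Set.inter_eq_left]
  exact Set.insert_subset hr h

lemma cert_subR_eq (I' : IAF α) (r : α × α) (h : I'.R ⊆ I'.A ×ˢ I'.A) :
    (I'.subR {r}).cert = ⟨I'.A, I'.R⟩ := by
  simp only [IAF.subR, IAF.cert]
  congr 1
  exact Set.inter_eq_left.mpr h

lemma exists_ad_comp (I : IAF α) (S : Set α) (hWF : I.WF) (hAt : I.Aq = ∅)
    (hns : ¬ I.stableSem S Sem.ad) :
    ∃ Q : Set (α × α), I.R ⊆ Q ∧ Q ⊆ I.R ∪ I.Rq ∧ AF.isAd ⟨I.A, Q⟩ S := by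
  have h2 : ¬ I.stableJ S (Sem.ad, false) := fun h => hns (Or.inr h)
  unfold IAF.stableJ at h2
  push_neg at h2
  obtain ⟨F, hFc, hF⟩ := h2
  have hFad : F.isAd S := not_not.mp hF
  obtain ⟨I'', hPart, rfl⟩ := hFc
  have hA'' : I''.A = I.A := by
    apply Set.Subset.antisymm
    · have := hPart.2.2.1; rwa [hAt, Set.union_empty] at this
    · exact hPart.2.1
  have hRA : I.R ⊆ I.A ×ˢ I.A := by
    have := hWF.2.2.1; rwa [hAt, Set.union_empty] at this
  have hAq'' : I''.Aq = ∅ := Set.subset_eq_empty (hAt ▸ hPart.2.2.2.2.2.1) rfl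
  refine ⟨I''.R ∩ I.A ×ˢ I.A, ?_, ?_, ?_⟩
  · intro p hp
    have hpA : p ∈ I.A ×ˢ I.A := hRA hp
    have hmem : p ∈ I.R ∩ (I''.A ∪ I''.Aq) ×ˢ (I''.A ∪ I''.Aq) := by
      rw [hAq'', hA'', Set.union_empty]; exact ⟨hp, hpA⟩
    exact ⟨hPart.2.2.2.1 hmem, hpA⟩
  · exact fun p hp => hPart.2.2.2.2.1 hp.1
  · unfold IAF.cert at hFad
    rwa [hA''] at hFad

end Stmt3Aux

/-- characterization of `(ad,true)`-relevance of addition in an AtIAF. -/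
theorem stmt3 {α : Type u} (I : IAF α) (S : Set α)
    (hWF : I.WF) (hAt : I.Aq = ∅) (hS : S ⊆ I.A)
    (hns : ¬ I.stableSem S Sem.ad) :
    ∀ r ∈ I.Rq, (r.1 ∉ S ∨ r.2 ∉ S) →
      (Elem.att r ∈ REplus I S (Sem.ad, true) ↔
        r.1 ∈ S ∧ r.2 ∉ I.plusI S ∧ ¬ S ⊆ I.simI {r.2}) := by
  have hRA : I.R ⊆ I.A ×ˢ I.A := by
    have := hWF.2.2.1; rwa [hAt, Set.union_empty] at this
  have hRqA : I.Rq ⊆ I.A ×ˢ I.A := by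
    have := hWF.2.2.2; rwa [hAt, Set.union_empty] at this
  have hdisj : Disjoint I.R I.Rq := hWF.2.1
  rintro ⟨a, b⟩ hr hab
  have haA : a ∈ I.A := (hRqA hr).1
  have hbA : b ∈ I.A := (hRqA hr).2
  constructor
  · rintro ⟨-, I', hPart, hOnly, hAdd, hSub⟩
    obtain ⟨hAq', hRq'⟩ := hOnly
    have hA' : I'.A = I.A := by
      apply Set.Subset.antisymm
      · have := hPart.2.2.1; rwa [hAt, Set.union_empty] at this
      · exact hPart.2.1
    have hR'sub : I'.R ⊆ I.R ∪ I.Rq := hPart.2.2.2.2.1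
    have hR'A : I'.R ⊆ I'.A ×ˢ I'.A := by
      rw [hA']; exact fun p hp => (Set.union_subset hRA hRqA) (hR'sub hp)
    have hRsub : I.R ⊆ I'.R := by
      intro p hp
      refine hPart.2.2.2.1 ⟨hp, ?_⟩
      rw [hAq', hA', Set.union_empty]
      exact hRA hp
    have hAdd' : AF.isAd ⟨I.A, insert (a, b) I'.R⟩ S := by
      have h : AF.isAd ((I'.addR {(a, b)}).cert) S := hAdd
      rwa [cert_addR_eq I' (a, b) hR'A (by rw [hA']; exact ⟨haA, hbA⟩), hA'] at h
    have hSub' : ¬ AF.isAd ⟨I.A, I'.R⟩ S := by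
      intro h
      apply hSub
      show AF.isAd ((I'.subR {(a, b)}).cert) S
      rwa [cert_subR_eq I' (a, b) hR'A, hA']
    have hkey : ∀ _ : (a ∉ S ∨ b ∈ AF.plusSet ⟨I.A, I'.R⟩ S ∨ ∀ c ∈ S, (b, c) ∉ I'.R),
        False := fun h => hSub' (ad_of_ad_insert _ _ _ _ _ h hAdd')
    have haS : a ∈ S := by_contra fun h => hkey (Or.inl h)
    refine ⟨haS, ?_, ?_⟩
    · intro hbP
      obtain ⟨-, t, ht, htb⟩ := hbP
      exact hkey (Or.inr (Or.inl ⟨hbA, t, ht, hRsub htb⟩))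
    · intro hsim
      refine hkey (Or.inr (Or.inr ?_))
      intro c hc hbc
      exact (hsim hc).2 b rfl (hR'sub hbc)
  · rintro ⟨haS, hbP, hsim⟩
    have hbS : b ∉ S := hab.resolve_left (not_not_intro haS)
    obtain ⟨Q₂, hRQ₂, hQ₂sub, hQ₂ad⟩ := exists_ad_comp I S hWF hAt hns
    obtain ⟨hSA₂, hcf₂, hdef₂⟩ := (isAd_iff' _ _).mp hQ₂ad
    have hc : ∃ c ∈ S, (b, c) ∈ I.R ∪ I.Rq := by
      by_contra h
      push_neg at h
      apply hsim
      intro c hcS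
      refine ⟨Or.inl (hS hcS), fun y hy => ?_⟩
      rw [Set.mem_singleton_iff] at hy
      rw [hy]
      exact h c hcS
    obtain ⟨c, hcS, hbc⟩ := hc
    set Rem : Set (α × α) := {p | p.1 ∈ S ∧ p.2 = b ∧ p ∈ I.Rq} with hRemdef
    set Q' : Set (α × α) := (Q₂ ∪ {(b, c)}) \ Rem with hQ'def
    have hrQ' : (a, b) ∉ Q' := fun h => h.2 ⟨haS, rfl, hr⟩
    have hbcQ' : (b, c) ∈ Q' :=
      ⟨Or.inr rfl, fun h => hbS h.1⟩
    have hRQ' : I.R ⊆ Q' := by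
      intro p hp
      exact ⟨Or.inl (hRQ₂ hp), fun h => (Set.disjoint_left.mp hdisj hp) h.2.2⟩
    have hQ'sub : Q' ⊆ I.R ∪ I.Rq := by
      intro p hp
      rcases hp.1 with h | h
      · exact hQ₂sub h
      · rw [Set.mem_singleton_iff] at h; rw [h]; exact hbc
    have hQ'A : Q' ⊆ I.A ×ˢ I.A := fun p hp => (Set.union_subset hRA hRqA) (hQ'sub hp)
    have hbnotQ' : ∀ t ∈ S, (t, b) ∉ Q' := by
      rintro t ht ⟨hmem, hnrem⟩
      rcases hmem with h | h
      · rcases hQ₂sub h with h' | h'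
        · exact hbP ⟨Or.inl hbA, t, ht, h'⟩
        · exact hnrem ⟨ht, rfl, h'⟩
      · rw [Set.mem_singleton_iff] at h
        have : b ∈ S := by
          have hcb : c = b := (congrArg Prod.snd h).symm
          rwa [hcb] at hcS
        exact hbS this
    refine ⟨hr, ⟨I.A, ∅, Q', {(a, b)}⟩, ?_, ⟨rfl, rfl⟩, ?_, ?_⟩
    · refine ⟨⟨?_, ?_, ?_, ?_⟩, subset_rfl, Set.subset_union_left, ?_, hQ'sub, ?_, ?_⟩
      · exact Set.disjoint_empty _
      · exact Set.disjoint_singleton_right.mpr hrQ'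
      · show Q' ⊆ (I.A ∪ ∅) ×ˢ (I.A ∪ ∅)
        rwa [Set.union_empty]
      · show ({(a, b)} : Set (α × α)) ⊆ (I.A ∪ ∅) ×ˢ (I.A ∪ ∅)
        rw [Set.union_empty]
        exact Set.singleton_subset_iff.mpr ⟨haA, hbA⟩
      · exact fun p hp => hRQ' hp.1
      · exact Set.empty_subset _
      · exact Set.singleton_subset_iff.mpr hr
    · show AF.isAd ((IAF.addR ⟨I.A, ∅, Q', {(a, b)}⟩ {(a, b)}).cert) S
      rw [cert_addR_eq ⟨I.A, ∅, Q', {(a, b)}⟩ (a, b) hQ'A ⟨haA, hbA⟩]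
      rw [isAd_iff']
      refine ⟨hS, ?_, ?_⟩
      · rintro x hx ⟨-, t, ht, htx⟩
        rcases Set.mem_insert_iff.mp htx with heq | hQ
        · have : x = b := congrArg Prod.snd heq
          exact hbS (this ▸ hx)
        · rcases hQ.1 with h | h
          · exact hcf₂ x hx ⟨hS hx, t, ht, h⟩
          · rw [Set.mem_singleton_iff] at h
            have : t = b := congrArg Prod.fst h
            exact hbS (this ▸ ht)
      · intro s hs x hx
        rcases Set.mem_insert_iff.mp hx with heq | hQ
        · have : s = b := congrArg Prod.snd heq
          exact absurd (this ▸ hs) hbS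
        · rcases hQ.1 with h | h
          · obtain ⟨hxA, t, ht, htx₂⟩ := hdef₂ s hs x h
            by_cases hxb : x = b
            · subst hxb; exact ⟨hbA, a, haS, Set.mem_insert _ _⟩
            · refine ⟨hxA, t, ht, Set.mem_insert_iff.mpr (Or.inr ⟨Or.inl htx₂, ?_⟩)⟩
              exact fun hrem => hxb hrem.2.1
          · rw [Set.mem_singleton_iff] at h
            have hxb : x = b := congrArg Prod.fst h
            subst hxb
            exact ⟨hbA, a, haS, Set.mem_insert _ _⟩
    · intro hcontra
      have h : AF.isAd ((IAF.subR ⟨I.A, ∅, Q', {(a, b)}⟩ {(a, b)}).cert) S := hcontra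
      rw [cert_subR_eq ⟨I.A, ∅, Q', {(a, b)}⟩ (a, b) hQ'A] at h
      obtain ⟨-, -, hdef⟩ := (isAd_iff' _ _).mp h
      obtain ⟨-, t, ht, htb⟩ := hdef c hcS b hbcQ'
      exact hbnotQ' t ht htb
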